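/- arXiv:1611.03485 — 3 statements merged into one kernel-verified Lean document; each statement's English description precedes it below -/
import Mathlib

section
/- Let r>0, let n_1,n_2≥0 be integers, and let R(z)=Σ_{k=−n_1}^{n_2} σ_k z^k with σ_k∈ℂ be a Laurent polynomial; set l=n_1+n_2. Then for all 0<p<q≤∞, with m_p the unique positive integer in [p/2, 1+p/2): ‖R‖_{L^q(γ_r)} ≤ ( (m_p·l+1)/(2πr) )^{1/p−1/q} · ‖R‖_{L^p(γ_r)}. -/
/-! Multiplying by z^{n₁} turns R into a polynomial P of degree at most l, and on γ_r the
polynomial P^m has modulus r^{n₁ m} |R|^m and degree at most m l. Parseval's identity and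
Cauchy–Schwarz give |Q(z)|² ≤ (deg Q + 1)/(2π) ∫ |Q(r e^{it})|² dt on |z| = r, hence
‖R‖_∞^{2m} ≤ (m l + 1)/(2πr) ‖R‖_{2m}^{2m}. Since 2m_p ≥ p, the pointwise bound
|R|^{2m_p} ≤ ‖R‖_∞^{2m_p - p} |R|^p turns this into ‖R‖_∞^p ≤ C ‖R‖_p^p, which is the case
q = ∞; for finite q one integrates |R|^q ≤ ‖R‖_∞^{q-p} |R|^p. -/

open Complex MeasureTheory Polynomial Real Set

noncomputable section

def circLp (r : ℝ) (f : ℂ → ℂ) (p : ℝ) : ℝ :=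
  (∫ t in (0:ℝ)..(2 * Real.pi), ‖f ((r:ℂ) * Complex.exp (t * Complex.I))‖ ^ p * r) ^ (1/p)

def circSup (r : ℝ) (f : ℂ → ℂ) : ℝ :=
  sSup ((fun z => ‖f z‖) '' {z : ℂ | ‖z‖ = r})

open ComplexConjugate

theorem Real.rpow_le_rpow_sub_mul_rpow {x M p q : ℝ} (hx : 0 ≤ x) (hxM : x ≤ M) (hp : 0 < p)
    (hpq : p ≤ q) : x ^ q ≤ M ^ (q - p) * x ^ p := by
  rcases hx.eq_or_lt with rfl | hx
  · simp [zero_rpow (hp.trans_le hpq).ne', zero_rpow hp.ne']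
  · calc x ^ q = x ^ (q - p) * x ^ p := by rw [← rpow_add hx, sub_add_cancel]
      _ ≤ M ^ (q - p) * x ^ p := by gcongr

theorem Real.rpow_le_of_rpow_le_rpow_sub_mul {S K p u : ℝ} (hS : 0 ≤ S) (hK : 0 ≤ K) (hp : 0 < p)
    (h : S ^ u ≤ S ^ (u - p) * K) : S ^ p ≤ K := by
  rcases hS.eq_or_lt with rfl | hS
  · rwa [zero_rpow hp.ne']
  · rw [show S ^ u = S ^ (u - p) * S ^ p by rw [← rpow_add hS, sub_add_cancel]] at h
    exact le_of_mul_le_mul_left h (rpow_pos_of_pos hS _)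

theorem Real.le_rpow_one_div_mul_of_rpow_le {S C I p : ℝ} (hS : 0 ≤ S) (hC : 0 ≤ C) (hI : 0 ≤ I)
    (hp : 0 < p) (h : S ^ p ≤ C * I) : S ≤ C ^ (1 / p) * I ^ (1 / p) := by
  rwa [← mul_rpow hC hI, one_div, le_rpow_inv_iff_of_pos hS (by positivity) hp]

theorem Real.rpow_one_div_le_of_le_rpow_sub_mul {S C Ip Iq p q : ℝ} (hS : 0 ≤ S) (hC : 0 ≤ C)
    (hIp : 0 ≤ Ip) (hIq : 0 ≤ Iq) (hp : 0 < p) (hpq : p < q) (hsup : S ^ p ≤ C * Ip)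
    (h : Iq ≤ S ^ (q - p) * Ip) : Iq ^ (1 / q) ≤ C ^ (1 / p - 1 / q) * Ip ^ (1 / p) := by
  have hq : 0 < q := hp.trans hpq
  have hSq : S ^ (q - p) ≤ (C * Ip) ^ ((q - p) / p) := by
    rw [show q - p = p * ((q - p) / p) by field_simp, rpow_mul hS, mul_div_cancel_left₀ _ hp.ne']
    gcongr
  calc Iq ^ (1 / q) ≤ ((C * Ip) ^ ((q - p) / p) * Ip) ^ (1 / q) := by
        gcongr
        exact h.trans (by gcongr)
    _ = C ^ (1 / p - 1 / q) * Ip ^ (1 / p) := by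
      have hexp : (q - p) / p + 1 = q / p := by field_simp; ring
      rw [mul_rpow hC hIp, mul_assoc, ← rpow_add_one' hIp (by rw [hexp]; positivity), hexp,
        mul_rpow (by positivity) (by positivity), ← rpow_mul hC, ← rpow_mul hIp]
      congr 2 <;> field_simp

theorem integral_exp_int_mul_I (n : ℤ) :
    ∫ t in (0:ℝ)..2 * π, exp (n * t * I) = if n = 0 then (2 * π : ℂ) else 0 := by
  split_ifs with hn
  · simp [hn]
  · have hnI : (n : ℂ) * I ≠ 0 := by simp [hn]
    have hper : exp (n * I * (2 * π)) = 1 := by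
      rw [show (n : ℂ) * I * (2 * π) = n * (2 * π * I) by ring, exp_int_mul_two_pi_mul_I]
    simp_rw [show ∀ t : ℝ, (n : ℂ) * t * I = n * I * t from fun t => by ring]
    simp [integral_exp_mul_complex hnI, hper]

theorem mul_circle_pow_mul_conj (a b : ℂ) (r t : ℝ) (j k : ℕ) :
    a * (r * exp (t * I)) ^ j * conj (b * (r * exp (t * I)) ^ k) =
      a * conj b * r ^ (j + k) * exp (((j : ℤ) - k : ℤ) * t * I) := by
  have hexp : exp (((j : ℤ) - k : ℤ) * t * I) = exp (t * I) ^ j * exp (-(t * I)) ^ k := by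
    rw [← Complex.exp_nat_mul, ← Complex.exp_nat_mul, ← Complex.exp_add]
    push_cast
    ring_nf
  simp only [map_mul, map_pow, conj_ofReal, ← exp_conj, hexp, conj_I, mul_neg, mul_pow, pow_add]
  ring

theorem integral_norm_sum_circle_sq (d : ℕ) (a : ℕ → ℂ) (r : ℝ) :
    ∫ t in (0:ℝ)..2 * π, ‖∑ j ∈ Finset.range d, a j * (r * exp (t * I)) ^ j‖ ^ 2 =
      2 * π * ∑ j ∈ Finset.range d, ‖a j‖ ^ 2 * r ^ (2 * j) := by
  apply ofReal_injective
  calc ((∫ t in (0:ℝ)..2 * π, ‖∑ j ∈ Finset.range d, a j * (r * exp (t * I)) ^ j‖ ^ 2 : ℝ) : ℂ)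
      = ∫ t in (0:ℝ)..2 * π, ∑ j ∈ Finset.range d, ∑ k ∈ Finset.range d,
          a j * conj (a k) * r ^ (j + k) * exp (((j : ℤ) - k : ℤ) * t * I) := by
        rw [← intervalIntegral.integral_ofReal]
        congr 1 with t
        rw [ofReal_pow, ← mul_conj', map_sum, Finset.sum_mul_sum]
        simp only [mul_circle_pow_mul_conj]
    _ = ∑ j ∈ Finset.range d, ∑ k ∈ Finset.range d,
          a j * conj (a k) * r ^ (j + k) * if (j : ℤ) - k = 0 then (2 * π : ℂ) else 0 := by
        rw [intervalIntegral.integral_finsetSum fun j _ => by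
          apply Continuous.intervalIntegrable; fun_prop]
        refine Finset.sum_congr rfl fun j _ => ?_
        rw [intervalIntegral.integral_finsetSum fun k _ => by
          apply Continuous.intervalIntegrable; fun_prop]
        simp only [intervalIntegral.integral_const_mul, integral_exp_int_mul_I]
    _ = ((2 * π * ∑ j ∈ Finset.range d, ‖a j‖ ^ 2 * r ^ (2 * j) : ℝ) : ℂ) := by
        simp only [sub_eq_zero, Nat.cast_inj, mul_ite, mul_zero, Finset.sum_ite_eq,
          Finset.mem_range]
        push_cast
        rw [Finset.mul_sum]
        refine Finset.sum_congr rfl fun j hj => ?_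
        rw [if_pos (Finset.mem_range.mp hj), mul_conj']
        ring

theorem norm_sum_sq_le_card_mul_sum (d : ℕ) (a : ℕ → ℂ) {z : ℂ} {r : ℝ} (hz : ‖z‖ = r) :
    ‖∑ j ∈ Finset.range d, a j * z ^ j‖ ^ 2 ≤
      d * ∑ j ∈ Finset.range d, ‖a j‖ ^ 2 * r ^ (2 * j) := by
  calc ‖∑ j ∈ Finset.range d, a j * z ^ j‖ ^ 2 ≤ (∑ j ∈ Finset.range d, ‖a j‖ * r ^ j) ^ 2 := by
        gcongr
        refine (norm_sum_le _ _).trans_eq (Finset.sum_congr rfl fun j _ => ?_)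
        rw [norm_mul, norm_pow, hz]
    _ ≤ d * ∑ j ∈ Finset.range d, ‖a j‖ ^ 2 * r ^ (2 * j) := by
        simpa [mul_pow, pow_mul'] using sq_sum_le_card_mul_sum_sq (s := Finset.range d)
          (f := fun j => ‖a j‖ * r ^ j)

theorem Polynomial.norm_eval_sq_mul_two_pi_le (Q : ℂ[X]) {z : ℂ} {r : ℝ} (hz : ‖z‖ = r) :
    ‖Q.eval z‖ ^ 2 * (2 * π) ≤
      (Q.natDegree + 1) * ∫ t in (0:ℝ)..2 * π, ‖Q.eval (r * exp (t * I))‖ ^ 2 := by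
  simp only [eval_eq_sum_range, integral_norm_sum_circle_sq]
  have := norm_sum_sq_le_card_mul_sum (Q.natDegree + 1) Q.coeff hz
  push_cast at this
  nlinarith [pi_pos]

theorem exists_polynomial_eval_eq_pow_mul_laurent (n₁ n₂ : ℕ) (σ : ℤ → ℂ) :
    ∃ P : ℂ[X], P.natDegree ≤ n₁ + n₂ ∧ ∀ w ≠ 0,
      P.eval w = w ^ n₁ * ∑ k ∈ Finset.Icc (-(n₁:ℤ)) n₂, σ k * w ^ k := by
  refine ⟨∑ k ∈ Finset.Icc (-(n₁:ℤ)) n₂, C (σ k) * X ^ (k + n₁).toNat, ?_, fun w hw => ?_⟩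
  · refine natDegree_sum_le_of_forall_le _ _ fun k hk => (natDegree_C_mul_le _ _).trans ?_
    rw [natDegree_X_pow]
    have := (Finset.mem_Icc.mp hk).2
    omega
  · rw [eval_finsetSum, Finset.mul_sum]
    refine Finset.sum_congr rfl fun k hk => ?_
    have hk : 0 ≤ k + n₁ := by linarith [(Finset.mem_Icc.mp hk).1]
    rw [eval_mul, eval_C, eval_pow, eval_X, ← zpow_natCast, Int.toNat_of_nonneg hk,
      zpow_add₀ hw, zpow_natCast]
    ring

theorem continuousOn_sphere_of_laurent {r : ℝ} (hr : r ≠ 0) {n₁ n₂ : ℕ} {σ : ℤ → ℂ}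
    {R : ℂ → ℂ} (hR : ∀ z, R z = ∑ k ∈ Finset.Icc (-(n₁:ℤ)) n₂, σ k * z ^ k) :
    ContinuousOn R (Metric.sphere 0 r) := by
  rw [funext hR]
  exact continuousOn_finsetSum _ fun k _ => continuousOn_const.mul <|
    (continuousOn_zpow₀ k).mono fun w hw => ne_zero_of_mem_sphere hr ⟨w, hw⟩

theorem norm_ofReal_mul_exp_mul_I {r : ℝ} (hr : 0 ≤ r) (t : ℝ) : ‖(r : ℂ) * exp (t * I)‖ = r := by
  simp [← circleMap_zero, abs_of_nonneg hr]

def circLpPow (r : ℝ) (f : ℂ → ℂ) (p : ℝ) : ℝ :=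
  ∫ t in (0:ℝ)..2 * π, ‖f (r * exp (t * I))‖ ^ p * r

theorem circLp_eq_circLpPow_rpow (r : ℝ) (f : ℂ → ℂ) (p : ℝ) :
    circLp r f p = circLpPow r f p ^ (1 / p) := rfl

theorem circLpPow_nonneg {r : ℝ} (hr : 0 ≤ r) (f : ℂ → ℂ) (p : ℝ) : 0 ≤ circLpPow r f p :=
  intervalIntegral.integral_nonneg (by positivity) fun _ _ => by positivity

theorem ContinuousOn.comp_ofReal_mul_exp_mul_I {r : ℝ} (hr : 0 ≤ r) {f : ℂ → ℂ}
    (hf : ContinuousOn f (Metric.sphere 0 r)) : Continuous fun t : ℝ => f (r * exp (t * I)) := by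
  simp only [← circleMap_zero]
  exact hf.comp_continuous (continuous_circleMap 0 r) (circleMap_mem_sphere 0 hr)

theorem circLpPow_le_rpow_sub_mul {r M p q : ℝ} (hr : 0 ≤ r) {f : ℂ → ℂ}
    (hf : ContinuousOn f (Metric.sphere 0 r)) (hM : ∀ z, ‖z‖ = r → ‖f z‖ ≤ M) (hp : 0 < p)
    (hpq : p ≤ q) : circLpPow r f q ≤ M ^ (q - p) * circLpPow r f p := by
  have hcont := (hf.comp_ofReal_mul_exp_mul_I hr).norm
  rw [circLpPow, circLpPow, ← intervalIntegral.integral_const_mul]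
  refine intervalIntegral.integral_mono_on (by positivity) ?_ ?_ fun t _ => ?_
  · exact ((hcont.rpow_const fun _ => Or.inr (hp.trans_le hpq).le).mul
      continuous_const).intervalIntegrable _ _
  · exact (continuous_const.mul ((hcont.rpow_const fun _ => Or.inr hp.le).mul
      continuous_const)).intervalIntegrable _ _
  · rw [← mul_assoc]
    gcongr
    exact rpow_le_rpow_sub_mul_rpow (norm_nonneg _) (hM _ (norm_ofReal_mul_exp_mul_I hr t)) hp hpq

theorem exists_circSup_eq {r : ℝ} (hr : 0 ≤ r) {f : ℂ → ℂ}
    (hf : ContinuousOn f (Metric.sphere 0 r)) :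
    ∃ z, ‖z‖ = r ∧ circSup r f = ‖f z‖ ∧ ∀ w, ‖w‖ = r → ‖f w‖ ≤ circSup r f := by
  have hsphere : {z : ℂ | ‖z‖ = r} = Metric.sphere 0 r := by ext; simp
  obtain ⟨z, hz, hsup, hle⟩ := (isCompact_sphere (0 : ℂ) r).exists_sSup_image_eq_and_ge
    (NormedSpace.sphere_nonempty.mpr hr) hf.norm
  rw [← hsphere] at hz hle
  rw [circSup, hsphere, hsup]
  exact ⟨z, hz, rfl, fun w hw => hle w hw⟩

theorem rpow_circSup_le_of_laurent {r : ℝ} (hr : 0 < r) {n₁ n₂ : ℕ} {σ : ℤ → ℂ} {R : ℂ → ℂ}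
    (hR : ∀ z, R z = ∑ k ∈ Finset.Icc (-(n₁:ℤ)) n₂, σ k * z ^ k) (m : ℕ) :
    circSup r R ^ (2 * m : ℝ) ≤
      (m * (n₁ + n₂) + 1) / (2 * π * r) * circLpPow r R (2 * m) := by
  obtain ⟨P, hPdeg, hP⟩ := exists_polynomial_eval_eq_pow_mul_laurent n₁ n₂ σ
  obtain ⟨z, hz, hsup, -⟩ := exists_circSup_eq hr.le (continuousOn_sphere_of_laurent hr.ne' hR)
  have hQ : ∀ w : ℂ, ‖w‖ = r → ‖(P ^ m).eval w‖ ^ 2 = r ^ (2 * n₁ * m) * ‖R w‖ ^ (2 * m) := by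
    intro w hw
    have hw0 : w ≠ 0 := by rintro rfl; simp [hr.ne] at hw
    rw [eval_pow, hP w hw0, ← hR, norm_pow, norm_mul, norm_pow, hw]
    ring
  have hdeg : ((P ^ m).natDegree + 1 : ℝ) ≤ m * (n₁ + n₂) + 1 := by
    have := (natDegree_pow_le (p := P) (n := m)).trans (Nat.mul_le_mul_left m hPdeg)
    exact_mod_cast Nat.succ_le_succ this
  have key := (P ^ m).norm_eval_sq_mul_two_pi_le hz
  simp only [hQ _ hz, hQ _ (norm_ofReal_mul_exp_mul_I hr.le _),
    intervalIntegral.integral_const_mul] at key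
  set A := ‖R z‖ ^ (2 * m)
  set J := ∫ t in (0:ℝ)..2 * π, ‖R (r * exp (t * I))‖ ^ (2 * m)
  have hJ : 0 ≤ J := intervalIntegral.integral_nonneg (by positivity) fun _ _ => by positivity
  have hA : A * (2 * π) ≤ (m * (n₁ + n₂) + 1) * J := by
    have hc : 0 < r ^ (2 * n₁ * m) := by positivity
    have : r ^ (2 * n₁ * m) * (A * (2 * π)) ≤ r ^ (2 * n₁ * m) * (((P ^ m).natDegree + 1) * J) := by
      linarith
    exact (le_of_mul_le_mul_left this hc).trans (by gcongr)
  have hcast : ∀ x : ℝ, x ^ (2 * m : ℝ) = x ^ (2 * m) := fun x => by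
    exact_mod_cast rpow_natCast x (2 * m)
  rw [circLpPow, intervalIntegral.integral_mul_const, hsup]
  simp only [hcast]
  rw [div_mul_eq_mul_div, le_div_iff₀ (by positivity)]
  calc A * (2 * π * r) = A * (2 * π) * r := by ring
    _ ≤ (m * (n₁ + n₂) + 1) * J * r := by gcongr
    _ = (m * (n₁ + n₂) + 1) * (J * r) := by ring

theorem stmt8_general
    (r : ℝ) (hr : 0 < r) (n1 n2 : ℕ) (σ : ℤ → ℂ)
    (R : ℂ → ℂ) (hR : ∀ z, R z = ∑ k ∈ Finset.Icc (-(n1:ℤ)) (n2:ℤ), σ k * z ^ k)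
    (l : ℕ) (hl : l = n1 + n2)
    (p : ℝ) (hp : 0 < p)
    (mp : ℕ) (hmp1 : p / 2 ≤ (mp : ℝ)) :
    (∀ q : ℝ, p < q → circLp r R q ≤
        (((mp : ℝ) * l + 1) / (2 * Real.pi * r)) ^ (1/p - 1/q) * circLp r R p) ∧
      circSup r R ≤ (((mp : ℝ) * l + 1) / (2 * Real.pi * r)) ^ (1/p) * circLp r R p := by
  have hcont := continuousOn_sphere_of_laurent hr.ne' hR
  obtain ⟨z, -, hSz, hle⟩ := exists_circSup_eq hr.le hcont
  set S := circSup r R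
  set C := ((mp : ℝ) * l + 1) / (2 * π * r)
  have hS : 0 ≤ S := hSz ▸ norm_nonneg _
  have hC : 0 ≤ C := by positivity
  have hIp := circLpPow_nonneg hr.le R p
  have hsup : S ^ p ≤ C * circLpPow r R p := by
    refine rpow_le_of_rpow_le_rpow_sub_mul (u := 2 * mp) hS (by positivity) hp ?_
    calc S ^ (2 * mp : ℝ) ≤ C * circLpPow r R (2 * mp) := by
          have := rpow_circSup_le_of_laurent hr hR mp
          rwa [← Nat.cast_add, ← hl] at this
      _ ≤ C * (S ^ (2 * mp - p) * circLpPow r R p) := by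
          gcongr
          exact circLpPow_le_rpow_sub_mul hr.le hcont hle hp (by linarith)
      _ = S ^ (2 * mp - p) * (C * circLpPow r R p) := by ring
  simp only [circLp_eq_circLpPow_rpow]
  refine ⟨fun q hpq => ?_, ?_⟩
  · exact rpow_one_div_le_of_le_rpow_sub_mul hS hC hIp (circLpPow_nonneg hr.le R q) hp hpq hsup
      (circLpPow_le_rpow_sub_mul hr.le hcont hle hp hpq.le)
  · exact le_rpow_one_div_mul_of_rpow_le hS hC hIp hp hsup

theorem stmt8
    (r : ℝ) (hr : 0 < r) (n1 n2 : ℕ) (σ : ℤ → ℂ)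
    (R : ℂ → ℂ) (hR : ∀ z, R z = ∑ k ∈ Finset.Icc (-(n1:ℤ)) (n2:ℤ), σ k * z ^ k)
    (l : ℕ) (hl : l = n1 + n2)
    (p : ℝ) (hp : 0 < p)
    (mp : ℕ) (hmp0 : 1 ≤ mp) (hmp1 : p / 2 ≤ (mp : ℝ)) (hmp2 : (mp : ℝ) < 1 + p / 2) :
    (∀ q : ℝ, p < q → circLp r R q ≤
        (((mp : ℝ) * l + 1) / (2 * Real.pi * r)) ^ (1/p - 1/q) * circLp r R p) ∧
      circSup r R ≤ (((mp : ℝ) * l + 1) / (2 * Real.pi * r)) ^ (1/p) * circLp r R p :=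
  stmt8_general r hr n1 n2 σ R hR l hl p hp mp hmp1

end
end

section
/- Let n≥1, let z_1,…,z_n∈ℂ all lie in the upper half-plane ℂ⁺ (with repetitions allowed), and let ρ_n⁺(z)=Σ_{k=1}^n 1/(z−z_k). Then: (i) for 1<p≤2, 2π·(sup_{x∈ℝ}|ρ_n⁺(x)|)^{p−1} ≥ (1/n)·cos(π(1−p/2))·∫_ℝ |ρ_n⁺(x)|^p dx; (ii) for p≥2, 2π·(sup_{x∈ℝ}|ρ_n⁺(x)|)^{p−1} ≥ (1/n)·∫_ℝ |ρ_n⁺(x)|^p dx. The same inequalities hold if all z_k lie in the lower half-plane ℂ⁻. -/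
/-!
For poles in the upper half-plane, `ρ` is holomorphic on the closed lower half-plane and
`Im ρ > 0` there, so `u = -I * ρ` maps it into the right half-plane, where the principal
power `u ^ p` is holomorphic. Since `|ρ(w)| = O(1 / |w|)`, shifting the line of integration
down to `-∞` gives `∫ u(x) ^ p dx = 0`, while `∫ Im ρ(x) dx = nπ` because every pole contributes
`π`. With `M = sup |ρ|`, a trigonometric inequality in `arg u ∈ (-π/2, π/2)` gives pointwise
`cos (π (1 - p/2)) |u|^p ≤ 2 M^(p-1) Re u - Re (u ^ p)` for `1 < p ≤ 2`; integrating proves (i).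
For `p ≥ 2`, `|ρ|^p ≤ M^(p-2) |ρ|^2` reduces (ii) to (i) at `p = 2`. Conjugation swaps the two
half-planes without changing `|ρ|` on the real line.
-/

open Complex MeasureTheory Real Set Filter Topology ComplexConjugate

theorem cos_mul_sub_cos_mul_pi_div_two_le {p ψ : ℝ} (hp₁ : 1 ≤ p) (hp₂ : p ≤ 2)
    (hψ : |ψ| ≤ π / 2) :
    Real.cos (p * ψ) - Real.cos (p * (π / 2)) ≤ 2 * Real.cos ψ := by
  wlog hψ₀ : 0 ≤ ψ generalizing ψ
  · simpa [mul_neg] using this (ψ := -ψ) (by rwa [abs_neg]) (by linarith)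
  rw [abs_of_nonneg hψ₀] at hψ
  have hπ := Real.pi_pos
  have hsin : Real.sin (p * (π / 2 - ψ) / 2) ≤ Real.sin (π / 2 - ψ) :=
    Real.sin_le_sin_of_le_of_le_pi_div_two (by nlinarith) (by linarith) (by nlinarith)
  have hsin₀ : 0 ≤ Real.sin (p * (π / 2 - ψ) / 2) :=
    Real.sin_nonneg_of_nonneg_of_le_pi (by nlinarith) (by nlinarith)
  calc Real.cos (p * ψ) - Real.cos (p * (π / 2))
      = 2 * Real.sin (p * (ψ + π / 2) / 2) * Real.sin (p * (π / 2 - ψ) / 2) := by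
        rw [Real.cos_sub_cos, show (p * ψ - p * (π / 2)) / 2 = -(p * (π / 2 - ψ) / 2) by ring,
          Real.sin_neg]
        ring_nf
    _ ≤ 2 * 1 * Real.sin (π / 2 - ψ) := by
        gcongr
        exact Real.sin_le_one _
    _ = 2 * Real.cos ψ := by rw [Real.sin_pi_div_two_sub, mul_one]

theorem cos_mul_norm_rpow_le_of_re_pos {u : ℂ} (hu : 0 < u.re) {p M : ℝ} (hp₁ : 1 ≤ p)
    (hp₂ : p ≤ 2) (hM : ‖u‖ ≤ M) :
    Real.cos (π * (1 - p / 2)) * ‖u‖ ^ p ≤ 2 * M ^ (p - 1) * u.re - (u ^ (p : ℂ)).re := by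
  have hu₀ : u ≠ 0 := by rintro rfl; simp at hu
  set r := ‖u‖
  have hr : 0 < r := norm_pos_iff.mpr hu₀
  have harg : |arg u| ≤ π / 2 := (abs_arg_lt_pi_div_two_iff.mpr (Or.inl hu)).le
  have hre : u.re = r * Real.cos (arg u) := by rw [cos_arg hu₀, mul_div_cancel₀ _ hr.ne']
  have hcos : 0 ≤ Real.cos (arg u) :=
    Real.cos_nonneg_of_neg_pi_div_two_le_of_le (abs_le.mp harg).1 (abs_le.mp harg).2
  have htrig := cos_mul_sub_cos_mul_pi_div_two_le hp₁ hp₂ harg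
  have hrp : r ^ p = r ^ (p - 1) * r := by
    rw [← Real.rpow_add_one hr.ne']; ring_nf
  have hrM : r ^ (p - 1) ≤ M ^ (p - 1) := Real.rpow_le_rpow hr.le hM (by linarith)
  rw [cpow_ofReal_re, hre, mul_comm (arg u) p,
    show π * (1 - p / 2) = π - p * (π / 2) by ring, Real.cos_pi_sub]
  have h₁ : r ^ p * (Real.cos (p * arg u) - Real.cos (p * (π / 2))) ≤
      r ^ p * (2 * Real.cos (arg u)) :=
    mul_le_mul_of_nonneg_left htrig (by positivity)
  have h₂ : r ^ (p - 1) * (r * Real.cos (arg u)) ≤ M ^ (p - 1) * (r * Real.cos (arg u)) :=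
    mul_le_mul_of_nonneg_right hrM (by positivity)
  rw [hrp] at h₁
  nlinarith

theorem norm_intervalIntegral_le_of_differentiableOn_im_nonpos {E : Type*}
    [NormedAddCommGroup E] [NormedSpace ℂ E] {f : ℂ → E} {B R : ℝ} (hR : 0 < R)
    (hf : DifferentiableOn ℂ f {w | w.im ≤ 0}) (hB : ∀ w : ℂ, w.im ≤ 0 → R ≤ ‖w‖ → ‖f w‖ ≤ B) :
    ‖∫ x in (-R)..R, f x‖ ≤ 4 * R * B := by
  have hrect := integral_boundary_rect_eq_zero_of_differentiableOn f ⟨-R, -R⟩ ⟨R, 0⟩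
    (hf.mono fun w hw => by
      rw [mem_reProdIm, uIcc_of_le (by simp [hR.le] : (-R : ℝ) ≤ 0)] at hw
      exact hw.2.2)
  simp only [ofReal_zero, zero_mul, add_zero] at hrect
  have hboundary : ∀ w : ℂ, w.im ≤ 0 → R ≤ |w.re| ∨ R ≤ |w.im| → ‖f w‖ ≤ B :=
    fun w him h => hB w him <|
      h.elim (fun h => h.trans (abs_re_le_norm w)) (fun h => h.trans (abs_im_le_norm w))
  have hbottom : ‖∫ x in (-R)..R, f (x + (-R : ℝ) * I)‖ ≤ B * (2 * R) := by
    refine (intervalIntegral.norm_integral_le_of_norm_le_const fun x _ =>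
      hboundary _ (by simp [hR.le]) (Or.inr (by simp [abs_of_pos hR]))).trans_eq ?_
    rw [sub_neg_eq_add, abs_of_pos (by linarith)]; ring
  have hvertical : ∀ c : ℝ, |c| = R → ‖I • ∫ y in (-R)..0, f (c + y * I)‖ ≤ B * R := by
    intro c hc
    rw [norm_smul, norm_I, one_mul]
    refine (intervalIntegral.norm_integral_le_of_norm_le_const fun y hy => hboundary _ ?_
      (Or.inl (by simp [hc]))).trans_eq ?_
    · rw [uIoc_of_le (by linarith)] at hy
      simpa using hy.2
    · rw [zero_sub, neg_neg, abs_of_pos hR]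
  set bottom := ∫ x in (-R)..R, f (x + (-R : ℝ) * I)
  set right := I • ∫ y in (-R)..0, f (R + y * I)
  set left := I • ∫ y in (-R)..0, f ((-R : ℝ) + y * I)
  have hsplit : ∫ x in (-R)..R, f x = bottom + right - left := by
    rw [eq_comm, ← sub_eq_zero, ← hrect]; abel
  rw [hsplit]
  linarith [norm_sub_le (bottom + right) left, norm_add_le bottom right,
    hvertical R (abs_of_pos hR), hvertical (-R) (by rw [abs_neg, abs_of_pos hR])]

theorem integrable_of_norm_le_one_add_norm_rpow {E : Type*} [NormedAddCommGroup E]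
    {g : ℝ → E} {p C : ℝ} (hp : 1 < p) (hg : Continuous g)
    (hbound : ∀ x, ‖g x‖ ≤ C * (1 + ‖x‖) ^ (-p)) : Integrable g :=
  ((integrable_one_add_norm (by simpa using hp)).const_mul C).mono' hg.aestronglyMeasurable
    (ae_of_all _ hbound)

theorem integral_eq_zero_of_differentiableOn_im_nonpos {E : Type*} [NormedAddCommGroup E]
    [NormedSpace ℂ E] {f : ℂ → E} {p C : ℝ} (hp : 1 < p)
    (hf : DifferentiableOn ℂ f {w | w.im ≤ 0})
    (hdecay : ∀ w : ℂ, w.im ≤ 0 → ‖f w‖ ≤ C * (1 + ‖w‖) ^ (-p)) :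
    ∫ x : ℝ, f x = 0 := by
  have hC : 0 ≤ C := by simpa using (norm_nonneg _).trans (hdecay 0 le_rfl)
  have hint : Integrable fun x : ℝ => f x :=
    integrable_of_norm_le_one_add_norm_rpow hp
      (hf.continuousOn.comp_continuous continuous_ofReal fun x => by simp)
      fun x => by simpa using hdecay x (by simp)
  have hbound : ∀ᶠ R in atTop, ‖∫ x in (-R)..R, f x‖ ≤ 4 * C * R ^ (-(p - 1)) := by
    filter_upwards [eventually_gt_atTop 0] with R hR
    refine (norm_intervalIntegral_le_of_differentiableOn_im_nonpos hR hf
      (B := C * R ^ (-p)) fun w hw hRw => (hdecay w hw).trans ?_).trans_eq ?_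
    · exact mul_le_mul_of_nonneg_left
        (Real.rpow_le_rpow_of_nonpos hR (by linarith) (by linarith)) hC
    · rw [neg_sub, sub_eq_add_neg, Real.rpow_add hR, Real.rpow_one]; ring
  have hlim : Tendsto (fun R : ℝ => 4 * C * R ^ (-(p - 1))) atTop (𝓝 0) := by
    have := (tendsto_rpow_neg_atTop (by linarith : 0 < p - 1)).const_mul (4 * C)
    rwa [mul_zero] at this
  exact norm_le_zero_iff.mp <| le_of_tendsto_of_tendsto
    (intervalIntegral_tendsto_integral hint tendsto_neg_atTop_atBot tendsto_id).norm hlim hbound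

theorem im_one_div_ofReal_sub {a : ℂ} (ha : a.im ≠ 0) (x : ℝ) :
    (1 / ((x : ℂ) - a)).im = a.im⁻¹ * (1 + ((x - a.re) / a.im) ^ 2)⁻¹ := by
  rw [one_div, inv_im, normSq_apply]
  simp only [sub_re, ofReal_re, sub_im, ofReal_im]
  field_simp
  ring

theorem integrable_im_one_div_ofReal_sub {a : ℂ} (ha : 0 < a.im) :
    Integrable fun x : ℝ => (1 / ((x : ℂ) - a)).im := by
  simp_rw [im_one_div_ofReal_sub ha.ne']
  exact ((integrable_inv_one_add_sq.comp_div ha.ne').comp_sub_right a.re).const_mul _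

theorem integral_im_one_div_ofReal_sub {a : ℂ} (ha : 0 < a.im) :
    ∫ x : ℝ, (1 / ((x : ℂ) - a)).im = π := by
  simp_rw [im_one_div_ofReal_sub ha.ne']
  rw [integral_const_mul, integral_sub_right_eq_self (fun x => (1 + (x / a.im) ^ 2)⁻¹),
    Measure.integral_comp_div (fun x => (1 + x ^ 2)⁻¹), integral_univ_inv_one_add_sq,
    abs_of_pos ha, smul_eq_mul, inv_mul_cancel_left₀ ha.ne']

theorem im_le_norm_sub_of_im_nonpos {a w : ℂ} (ha : 0 < a.im) (hw : w.im ≤ 0) :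
    a.im ≤ ‖w - a‖ :=
  le_trans (by rw [sub_im, abs_of_neg (by linarith)]; linarith) (abs_im_le_norm (w - a))

theorem one_add_norm_le_mul_norm_sub {a w : ℂ} (ha : 0 < a.im) (hw : w.im ≤ 0) :
    1 + ‖w‖ ≤ (1 + (1 + ‖a‖) / a.im) * ‖w - a‖ := by
  have h₁ : ‖w‖ ≤ ‖w - a‖ + ‖a‖ := norm_le_norm_sub_add w a
  have h₂ : 1 + ‖a‖ ≤ (1 + ‖a‖) / a.im * ‖w - a‖ := by
    rw [div_mul_eq_mul_div, le_div_iff₀ ha]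
    exact mul_le_mul_of_nonneg_left (im_le_norm_sub_of_im_nonpos ha hw) (by positivity)
  linarith

noncomputable def spf {ι : Type*} [Fintype ι] (z : ι → ℂ) (w : ℂ) : ℂ := ∑ k, 1 / (w - z k)

theorem spf_conj_ofReal {ι : Type*} [Fintype ι] (z : ι → ℂ) (x : ℝ) :
    spf (fun k => conj (z k)) x = conj (spf z x) := by
  simp [spf, map_sum]

section UpperHalfPlanePoles

variable {ι : Type*} [Fintype ι] {z : ι → ℂ}

theorem exists_norm_spf_le (hz : ∀ k, 0 < (z k).im) :
    ∃ K, 0 ≤ K ∧ ∀ w : ℂ, w.im ≤ 0 → ‖spf z w‖ ≤ K * (1 + ‖w‖)⁻¹ := by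
  refine ⟨∑ k, (1 + (1 + ‖z k‖) / (z k).im), ?_, fun w hw => ?_⟩
  · exact Finset.sum_nonneg fun k _ => by have := hz k; positivity
  rw [Finset.sum_mul]
  refine (norm_sum_le _ _).trans (Finset.sum_le_sum fun k _ => ?_)
  have hk := im_le_norm_sub_of_im_nonpos (hz k) hw
  rw [norm_div, norm_one, one_div, le_mul_inv_iff₀ (by positivity), inv_mul_eq_div,
    div_le_iff₀ (by linarith [hz k])]
  exact one_add_norm_le_mul_norm_sub (hz k) hw

theorem exists_norm_spf_rpow_le (hz : ∀ k, 0 < (z k).im) {p : ℝ} (hp : 0 ≤ p) :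
    ∃ C, ∀ w : ℂ, w.im ≤ 0 → ‖spf z w‖ ^ p ≤ C * (1 + ‖w‖) ^ (-p) := by
  obtain ⟨K, hK, hbound⟩ := exists_norm_spf_le hz
  refine ⟨K ^ p, fun w hw => ?_⟩
  rw [Real.rpow_neg (by positivity), ← Real.inv_rpow (by positivity),
    ← Real.mul_rpow hK (by positivity)]
  exact Real.rpow_le_rpow (norm_nonneg _) (hbound w hw) hp

theorem bddAbove_range_norm_spf (hz : ∀ k, 0 < (z k).im) :
    BddAbove (range fun x : ℝ => ‖spf z x‖) := by
  obtain ⟨K, hK, hbound⟩ := exists_norm_spf_le hz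
  refine ⟨K, forall_mem_range.mpr fun x => (hbound x (by simp)).trans ?_⟩
  exact mul_le_of_le_one_right hK (inv_le_one_of_one_le₀ (by simp))

theorem differentiableOn_spf (hz : ∀ k, 0 < (z k).im) :
    DifferentiableOn ℂ (spf z) {w | w.im ≤ 0} := by
  intro w hw
  refine (DifferentiableAt.fun_sum fun k _ => ?_).differentiableWithinAt
  exact (differentiableAt_const _).div (differentiableAt_id.sub_const _)
    (norm_pos_iff.mp ((hz k).trans_le (im_le_norm_sub_of_im_nonpos (hz k) hw)))

theorem continuous_spf_ofReal (hz : ∀ k, 0 < (z k).im) :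
    Continuous fun x : ℝ => spf z x :=
  (differentiableOn_spf hz).continuousOn.comp_continuous continuous_ofReal fun x => by simp

theorem integrable_norm_spf_rpow (hz : ∀ k, 0 < (z k).im) {p : ℝ} (hp : 1 < p) :
    Integrable fun x : ℝ => ‖spf z x‖ ^ p := by
  obtain ⟨C, hC⟩ := exists_norm_spf_rpow_le hz (p := p) (by linarith)
  refine integrable_of_norm_le_one_add_norm_rpow (C := C) hp
    ((continuous_spf_ofReal hz).norm.rpow_const fun _ => Or.inr (by linarith)) fun x => ?_
  rw [norm_of_nonneg (by positivity)]
  simpa using hC x (by simp)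

theorem im_spf_pos [Nonempty ι] (hz : ∀ k, 0 < (z k).im) {w : ℂ} (hw : w.im ≤ 0) :
    0 < (spf z w).im := by
  rw [spf, im_sum]
  refine Finset.sum_pos (fun k _ => ?_) Finset.univ_nonempty
  have hk := hz k
  have hne : w - z k ≠ 0 := norm_pos_iff.mp (hk.trans_le (im_le_norm_sub_of_im_nonpos hk hw))
  rw [one_div, inv_im, sub_im]
  exact div_pos (by linarith) (normSq_pos.mpr hne)

theorem integrable_im_spf (hz : ∀ k, 0 < (z k).im) :
    Integrable fun x : ℝ => (spf z x).im := by
  simp_rw [spf, im_sum]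
  exact integrable_finsetSum _ fun k _ => integrable_im_one_div_ofReal_sub (hz k)

theorem integral_im_spf (hz : ∀ k, 0 < (z k).im) :
    ∫ x : ℝ, (spf z x).im = Fintype.card ι * π := by
  simp_rw [spf, im_sum]
  rw [integral_finsetSum _ fun k _ => integrable_im_one_div_ofReal_sub (hz k),
    Finset.sum_congr rfl fun k _ => integral_im_one_div_ofReal_sub (hz k)]
  simp

theorem cos_mul_integral_norm_spf_rpow_le [Nonempty ι] (hz : ∀ k, 0 < (z k).im) {p M : ℝ}
    (hp₁ : 1 < p) (hp₂ : p ≤ 2) (hM : ∀ x : ℝ, ‖spf z x‖ ≤ M) :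
    Real.cos (π * (1 - p / 2)) * ∫ x : ℝ, ‖spf z x‖ ^ p ≤
      2 * π * Fintype.card ι * M ^ (p - 1) := by
  set Φ : ℂ → ℂ := fun w => (-I * spf z w) ^ (p : ℂ)
  have hre : ∀ w : ℂ, w.im ≤ 0 → 0 < (-I * spf z w).re := fun w hw => by
    simpa using im_spf_pos hz hw
  have hnorm : ∀ w, ‖Φ w‖ = ‖spf z w‖ ^ p := fun w => by simp [Φ, norm_cpow_real]
  obtain ⟨C, hC⟩ := exists_norm_spf_rpow_le hz (p := p) (by linarith)
  have hΦdiff : DifferentiableOn ℂ Φ {w | w.im ≤ 0} :=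
    ((differentiableOn_spf hz).const_mul _).cpow_const fun w hw => Or.inl (hre w hw)
  have hΦ : ∫ x : ℝ, Φ x = 0 :=
    integral_eq_zero_of_differentiableOn_im_nonpos hp₁ hΦdiff fun w hw => hnorm w ▸ hC w hw
  have hΦint : Integrable fun x : ℝ => Φ x :=
    integrable_of_norm_le_one_add_norm_rpow (C := C) hp₁
      (hΦdiff.continuousOn.comp_continuous continuous_ofReal fun x => by simp)
      fun x => by simpa [hnorm] using hC x (by simp)
  have hΦre : Integrable fun x : ℝ => (Φ x).re := hΦint.re
  have hΦre₀ : ∫ x : ℝ, (Φ x).re = 0 := by simpa [hΦ] using integral_re hΦint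
  have hpointwise : ∀ x : ℝ, Real.cos (π * (1 - p / 2)) * ‖spf z x‖ ^ p ≤
      2 * M ^ (p - 1) * (spf z x).im - (Φ x).re := fun x => by
    simpa [Φ] using cos_mul_norm_rpow_le_of_re_pos (hre x (by simp)) hp₁.le hp₂ (p := p)
      (by simpa using hM x)
  calc Real.cos (π * (1 - p / 2)) * ∫ x : ℝ, ‖spf z x‖ ^ p
      = ∫ x : ℝ, Real.cos (π * (1 - p / 2)) * ‖spf z x‖ ^ p := (integral_const_mul _ _).symm
    _ ≤ ∫ x : ℝ, (2 * M ^ (p - 1) * (spf z x).im - (Φ x).re) :=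
        integral_mono ((integrable_norm_spf_rpow hz hp₁).const_mul _)
          (((integrable_im_spf hz).const_mul _).sub hΦre) hpointwise
    _ = 2 * π * Fintype.card ι * M ^ (p - 1) := by
        rw [integral_sub ((integrable_im_spf hz).const_mul _) hΦre, integral_const_mul,
          integral_im_spf hz, hΦre₀]
        ring

theorem integral_norm_spf_rpow_le_of_two_le [Nonempty ι] (hz : ∀ k, 0 < (z k).im) {p M : ℝ}
    (hp : 2 ≤ p) (hM : ∀ x : ℝ, ‖spf z x‖ ≤ M) :
    ∫ x : ℝ, ‖spf z x‖ ^ p ≤ 2 * π * Fintype.card ι * M ^ (p - 1) := by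
  have hM₀ : 0 ≤ M := (norm_nonneg _).trans (hM 0)
  have hL2 : ∫ x : ℝ, ‖spf z x‖ ^ (2 : ℝ) ≤ 2 * π * Fintype.card ι * M := by
    have := cos_mul_integral_norm_spf_rpow_le hz one_lt_two le_rfl hM
    rwa [show π * (1 - (2 : ℝ) / 2) = 0 by ring, Real.cos_zero, one_mul,
      show (2 : ℝ) - 1 = 1 by norm_num, Real.rpow_one] at this
  have hpointwise : ∀ x : ℝ, ‖spf z x‖ ^ p ≤ M ^ (p - 2) * ‖spf z x‖ ^ (2 : ℝ) := fun x => by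
    rw [← sub_add_cancel p 2, Real.rpow_add' (norm_nonneg _) (by linarith), add_sub_cancel_right]
    exact mul_le_mul_of_nonneg_right (Real.rpow_le_rpow (norm_nonneg _) (hM x) (by linarith))
      (by positivity)
  calc ∫ x : ℝ, ‖spf z x‖ ^ p
      ≤ ∫ x : ℝ, M ^ (p - 2) * ‖spf z x‖ ^ (2 : ℝ) :=
        integral_mono (integrable_norm_spf_rpow hz (by linarith))
          ((integrable_norm_spf_rpow hz one_lt_two).const_mul _) hpointwise
    _ = M ^ (p - 2) * ∫ x : ℝ, ‖spf z x‖ ^ (2 : ℝ) := integral_const_mul _ _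
    _ ≤ M ^ (p - 2) * (2 * π * Fintype.card ι * M) := by gcongr
    _ = 2 * π * Fintype.card ι * M ^ (p - 1) := by
        rw [show p - 1 = p - 2 + 1 by ring, Real.rpow_add' hM₀ (by linarith), Real.rpow_one]
        ring

end UpperHalfPlanePoles

theorem stmt15
    (n : ℕ) (hn : 1 ≤ n) (z : Fin n → ℂ)
    (ρ : ℂ → ℂ) (hρ : ∀ w, ρ w = ∑ k, 1 / (w - z k))
    (hz : (∀ k, 0 < (z k).im) ∨ (∀ k, (z k).im < 0)) :
    (∀ p : ℝ, 1 < p → p ≤ 2 →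
      (1 / (n:ℝ)) * Real.cos (Real.pi * (1 - p/2)) * (∫ x : ℝ, ‖ρ (x:ℂ)‖ ^ p) ≤
        2 * Real.pi * (sSup (Set.range fun x : ℝ => ‖ρ (x:ℂ)‖)) ^ (p - 1)) ∧
    (∀ p : ℝ, 2 ≤ p →
      (1 / (n:ℝ)) * (∫ x : ℝ, ‖ρ (x:ℂ)‖ ^ p) ≤
        2 * Real.pi * (sSup (Set.range fun x : ℝ => ‖ρ (x:ℂ)‖)) ^ (p - 1)) := by
  wlog hupper : ∀ k, 0 < (z k).im generalizing z ρ
  · have hconj : ∀ k, 0 < (conj (z k)).im := fun k => by simpa using hz.resolve_left hupper k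
    have hnorm : ∀ x : ℝ, ‖ρ x‖ = ‖spf (fun k => conj (z k)) x‖ := fun x => by
      rw [spf_conj_ofReal, RCLike.norm_conj, hρ]; rfl
    simpa only [hnorm] using this _ (spf _) (fun w => rfl) (Or.inl hconj) hconj
  obtain rfl : ρ = spf z := funext hρ
  have : Nonempty (Fin n) := ⟨⟨0, hn⟩⟩
  have hM : ∀ x : ℝ, ‖spf z x‖ ≤ sSup (range fun x : ℝ => ‖spf z x‖) :=
    fun x => le_csSup (bddAbove_range_norm_spf hupper) ⟨x, rfl⟩
  have hn₀ : (0 : ℝ) < n := by exact_mod_cast hn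
  refine ⟨fun p hp₁ hp₂ => ?_, fun p hp => ?_⟩
  · have := cos_mul_integral_norm_spf_rpow_le hupper hp₁ hp₂ hM
    rw [Fintype.card_fin] at this
    rw [mul_assoc, one_div, inv_mul_le_iff₀ hn₀]
    linarith
  · have := integral_norm_spf_rpow_le_of_two_le hupper hp hM
    rw [Fintype.card_fin] at this
    rw [one_div, inv_mul_le_iff₀ hn₀]
    linarith
end

section
/- Let n≥1, α∈(0,π/2), and let ρ_n(z)=Σ_{k=1}^n 1/(z−z_k) be a simple partial fraction whose poles are z_k = r_k e^{iφ_k} with r_k>0 and φ_k∈(π−α, π+α) for all k. Then for every m∈ℕ, m≥1: (sup_{x≥0}|ρ_n(x)|)^{2m−1/2} ≤ ( Σ_{k=1}^n 1/r_k )^{2m−1/2} ≤ ( 2√n / cos^{2m}α ) · (m/π) · ∫_0^∞ |ρ_n(x)|^{2m} x^{−1/2} dx. -/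
/-!
For `x ≥ 0` and a pole `w` with `Re w ≤ 0` one has `|x - w| ≥ max (|w|, x)`, so
`|ρₙ(x)| ≤ S := ∑ 1/rₖ`, which is the first inequality, and `|ρₙ(x)| ≤ 2nS / (1 + Sx)`, which makes
the weighted integral finite. The sector condition `Re zₖ ≤ -cos α · rₖ` gives
`Re (x - zₖ)⁻¹ ≥ cos α / (x + rₖ) ≥ cos α · rₖ⁻¹ / (1 + Sx)`, hence
`|ρₙ(x)| ≥ Re ρₙ(x) ≥ cos α · S / (1 + Sx)`. Everything then reduces to
`∫₀^∞ x^(-1/2) (1 + Sx)^(-2m) dx ≥ π / (2m √S)`: for `m = 1` this is an equality, computed from the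
antiderivative `arctan (√S √x) / √S + √x / (1 + Sx)`, and for `m ≥ 2` it follows from
`(1 + Sx)^(2m) ≤ exp (2mSx)` and the Gamma integral.
-/

open MeasureTheory Real Set Filter Topology

lemma Real.cos_le_neg_cos_of_mem_Ioo {α φ : ℝ} (hα : α ≤ π) (hφ : φ ∈ Ioo (π - α) (π + α)) :
    cos φ ≤ -cos α := by
  have hdist : |φ - π| ≤ α := abs_le.2 ⟨by linarith [hφ.1], by linarith [hφ.2]⟩
  have := cos_le_cos_of_nonneg_of_le_pi (abs_nonneg _) hα hdist
  rwa [cos_abs, cos_sub_pi, le_neg] at this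

namespace Complex

variable {c s x : ℝ} {w : ℂ}

lemma div_norm_le_re_inv {u : ℂ} (h : c * ‖u‖ ≤ u.re) : c / ‖u‖ ≤ u⁻¹.re := by
  rcases eq_or_ne u 0 with rfl | hu
  · simp
  have hu' : 0 < ‖u‖ := norm_pos_iff.2 hu
  rw [inv_re, normSq_eq_norm_sq, div_le_div_iff₀ hu' (by positivity)]
  nlinarith

lemma norm_le_norm_ofReal_sub (hw : w.re ≤ 0) (hx : 0 ≤ x) : ‖w‖ ≤ ‖(x : ℂ) - w‖ := by
  refine (pow_le_pow_iff_left₀ (norm_nonneg _) (norm_nonneg _) two_ne_zero).1 ?_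
  simp only [Complex.sq_norm, normSq_apply, sub_re, sub_im, ofReal_re, ofReal_im]
  nlinarith

lemma le_norm_ofReal_sub (hw : w.re ≤ 0) : x ≤ ‖(x : ℂ) - w‖ :=
  calc x ≤ ((x : ℂ) - w).re := by simp [hw]
    _ ≤ ‖(x : ℂ) - w‖ := re_le_norm _

lemma norm_inv_ofReal_sub_le_inv_norm (hw : w.re ≤ 0) (hw0 : w ≠ 0) (hx : 0 ≤ x) :
    ‖((x : ℂ) - w)⁻¹‖ ≤ ‖w‖⁻¹ := by
  rw [norm_inv]
  exact inv_anti₀ (norm_pos_iff.2 hw0) (norm_le_norm_ofReal_sub hw hx)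

lemma norm_inv_ofReal_sub_le (hw : w.re ≤ 0) (hw0 : w ≠ 0) (hx : 0 ≤ x) (hs : ‖w‖⁻¹ ≤ s) :
    ‖((x : ℂ) - w)⁻¹‖ ≤ 2 * s / (1 + s * x) := by
  have hw_pos : 0 < ‖w‖ := norm_pos_iff.2 hw0
  have hs0 : 0 < s := (inv_pos.2 hw_pos).trans_le hs
  have hsw : 1 ≤ s * ‖w‖ := (inv_le_iff_one_le_mul₀ hw_pos).1 hs
  have h1 := norm_le_norm_ofReal_sub hw hx
  have h2 := le_norm_ofReal_sub (x := x) hw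
  rw [norm_inv, inv_eq_one_div, div_le_div_iff₀ (by linarith) (by positivity)]
  nlinarith

lemma le_re_inv_ofReal_sub (hc0 : 0 ≤ c) (hc1 : c ≤ 1) (hw : w.re ≤ -(c * ‖w‖)) (hw0 : w ≠ 0)
    (hx : 0 ≤ x) (hs : ‖w‖⁻¹ ≤ s) : c * ‖w‖⁻¹ / (1 + s * x) ≤ ((x : ℂ) - w)⁻¹.re := by
  have hw_pos : 0 < ‖w‖ := norm_pos_iff.2 hw0
  have hsw : 1 ≤ s * ‖w‖ := (inv_le_iff_one_le_mul₀ hw_pos).1 hs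
  have hre : w.re ≤ 0 := hw.trans (neg_nonpos.2 (by positivity))
  have hpos : 0 < ‖(x : ℂ) - w‖ := hw_pos.trans_le (norm_le_norm_ofReal_sub hre hx)
  have hupper : ‖(x : ℂ) - w‖ ≤ x + ‖w‖ := by
    simpa [abs_of_nonneg hx] using norm_sub_le (x : ℂ) w
  have hsector : c * ‖(x : ℂ) - w‖ ≤ ((x : ℂ) - w).re := by
    simp only [sub_re, ofReal_re]
    nlinarith
  refine le_trans ?_ (div_norm_le_re_inv hsector)
  rw [← div_eq_mul_inv, div_div]
  exact div_le_div_of_nonneg_left hc0 hpos (by nlinarith)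

lemma re_ofReal_mul_exp_le_neg_cos_mul_norm {r φ α : ℝ} (hr : 0 ≤ r) (hα : α ≤ π)
    (hφ : φ ∈ Ioo (π - α) (π + α)) :
    ((r : ℂ) * exp (φ * I)).re ≤ -(Real.cos α * ‖(r : ℂ) * exp (φ * I)‖) := by
  rw [re_ofReal_mul, exp_ofReal_mul_I_re, norm_mul, norm_exp_ofReal_mul_I, mul_one, norm_real,
    Real.norm_of_nonneg hr]
  nlinarith [cos_le_neg_cos_of_mem_Ioo hα hφ]

end Complex

section WeightedIntegral

variable {S : ℝ}

lemma hasDerivAt_arctan_sqrt_div_add_sqrt_div (hS : 0 < S) {x : ℝ} (hx : 0 < x) :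
    HasDerivAt (fun y => arctan (√S * √y) / √S + √y / (1 + S * y))
      (x ^ (-(1:ℝ)/2) / (1 + S * x) ^ 2) x := by
  have hsqrt := hasDerivAt_sqrt hx.ne'
  have hlin : HasDerivAt (fun y => 1 + S * y) S x := by
    simpa using ((hasDerivAt_id x).const_mul S).const_add 1
  refine ((((hsqrt.const_mul √S).arctan).div_const √S).add
    (hsqrt.div hlin (by positivity))).congr_deriv ?_
  have hrpow : x ^ (-(1:ℝ)/2) = (√x)⁻¹ := by
    rw [neg_div, rpow_neg hx.le, sqrt_eq_rpow, one_div]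
  rw [hrpow, mul_pow, sq_sqrt hS.le, sq_sqrt hx.le]
  field_simp
  rw [sq_sqrt hx.le]
  ring

lemma tendsto_arctan_sqrt_div_add_sqrt_div (hS : 0 < S) :
    Tendsto (fun y => arctan (√S * √y) / √S + √y / (1 + S * y)) atTop (𝓝 (π / 2 / √S)) := by
  have harctan : Tendsto (fun y => arctan (√S * √y) / √S) atTop (𝓝 (π / 2 / √S)) :=
    ((tendsto_arctan_atTop.mono_right nhdsWithin_le_nhds).comp
      (tendsto_sqrt_atTop.const_mul_atTop (sqrt_pos.2 hS))).div_const _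
  have hdecay : Tendsto (fun y => √y / (1 + S * y)) atTop (𝓝 0) := by
    refine squeeze_zero' ?_ ?_ ((tendsto_sqrt_atTop.const_mul_atTop hS).inv_tendsto_atTop)
    · filter_upwards [eventually_gt_atTop 0] with y hy
      positivity
    filter_upwards [eventually_gt_atTop 0] with y hy
    have hu : 0 < √y := sqrt_pos.2 hy
    calc √y / (1 + S * y) ≤ √y / (S * y) :=
          div_le_div_of_nonneg_left hu.le (by positivity) (by linarith)
      _ = (S * √y)⁻¹ := by
          field_simp
          exact sq_sqrt hy.le
  simpa using harctan.add hdecay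

lemma continuousAt_arctan_sqrt_div_add_sqrt_div_zero :
    ContinuousAt (fun y => arctan (√S * √y) / √S + √y / (1 + S * y)) 0 := by
  fun_prop (disch := simp)

lemma integrableOn_rpow_neg_half_div_one_add_mul_sq (hS : 0 < S) :
    IntegrableOn (fun x => x ^ (-(1:ℝ)/2) / (1 + S * x) ^ 2) (Ioi 0) :=
  integrableOn_Ioi_deriv_of_nonneg
    continuousAt_arctan_sqrt_div_add_sqrt_div_zero.continuousWithinAt
    (fun _ hx => hasDerivAt_arctan_sqrt_div_add_sqrt_div hS hx)
    (fun x hx => by have : 0 < x := hx; positivity) (tendsto_arctan_sqrt_div_add_sqrt_div hS)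

lemma integral_rpow_neg_half_div_one_add_mul_sq (hS : 0 < S) :
    ∫ x in Ioi 0, x ^ (-(1:ℝ)/2) / (1 + S * x) ^ 2 = π / 2 / √S := by
  rw [integral_Ioi_of_hasDerivAt_of_nonneg
    continuousAt_arctan_sqrt_div_add_sqrt_div_zero.continuousWithinAt
    (fun _ hx => hasDerivAt_arctan_sqrt_div_add_sqrt_div hS hx)
    (fun x hx => by have : 0 < x := hx; positivity) (tendsto_arctan_sqrt_div_add_sqrt_div hS)]
  simp

lemma integrableOn_rpow_neg_half_div_one_add_mul_pow (hS : 0 < S) {k : ℕ} (hk : 2 ≤ k) :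
    IntegrableOn (fun x => x ^ (-(1:ℝ)/2) / (1 + S * x) ^ k) (Ioi 0) := by
  refine (integrableOn_rpow_neg_half_div_one_add_mul_sq hS).mono'
    (by fun_prop : Measurable _).aestronglyMeasurable ?_
  filter_upwards [ae_restrict_mem measurableSet_Ioi] with x hx
  have hx : 0 < x := hx
  rw [Real.norm_of_nonneg (by positivity)]
  exact div_le_div_of_nonneg_left (by positivity) (by positivity)
    (pow_le_pow_right₀ (by nlinarith) hk)

lemma pi_div_le_integral_rpow_neg_half_div_one_add_mul_pow (hS : 0 < S) {m : ℕ} (hm : 1 ≤ m) :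
    π / (2 * m) / √S ≤ ∫ x in Ioi 0, x ^ (-(1:ℝ)/2) / (1 + S * x) ^ (2 * m) := by
  rcases hm.eq_or_lt with rfl | hm2
  · simp [integral_rpow_neg_half_div_one_add_mul_sq hS]
  -- `(1 + S x) ^ (2m) ≤ exp (2m S x)` reduces to a Gamma integral, which beats `π / (2m)`
  -- once `2m ≥ π`.
  have hm4 : (4 : ℝ) ≤ 2 * m := by norm_cast; omega
  have hb : 0 < 2 * m * S := by positivity
  have hgamma : ∫ x in Ioi 0, x ^ (-(1:ℝ)/2) * exp (-(2 * m * S) * x ^ (1:ℝ)) =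
      √π / √(2 * m) / √S := by
    rw [integral_rpow_mul_exp_neg_mul_rpow one_pos (by norm_num) hb, div_one, div_one, div_one,
      show -(1:ℝ)/2 + 1 = 1 / 2 by norm_num, Gamma_one_half_eq, mul_one, rpow_neg hb.le,
      ← sqrt_eq_rpow, sqrt_mul (by positivity), sqrt_mul zero_le_two]
    ring
  have hexp : ∀ x ∈ Ioi (0:ℝ),
      x ^ (-(1:ℝ)/2) * exp (-(2 * m * S) * x ^ (1:ℝ)) ≤ x ^ (-(1:ℝ)/2) / (1 + S * x) ^ (2 * m) := by
    intro x hx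
    have hx : 0 < x := hx
    rw [rpow_one, neg_mul, exp_neg, ← div_eq_mul_inv]
    gcongr
    calc (1 + S * x) ^ (2 * m) ≤ exp (S * x) ^ (2 * m) := by
          gcongr; linarith [add_one_le_exp (S * x)]
      _ = exp (2 * m * S * x) := by rw [← exp_nat_mul]; push_cast; ring_nf
  have hpi : √π ≤ √(2 * m) := sqrt_le_sqrt (pi_le_four.trans hm4)
  calc π / (2 * m) / √S = √π * √π / (√(2 * m) * √(2 * m)) / √S := by
        rw [mul_self_sqrt pi_pos.le, mul_self_sqrt (by positivity)]
    _ ≤ √π / √(2 * m) / √S := by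
        rw [← div_mul_div_comm]
        gcongr
        exact mul_le_of_le_one_right (by positivity) (div_le_one_of_le₀ hpi (sqrt_nonneg _))
    _ = _ := hgamma.symm
    _ ≤ _ := setIntegral_mono_on (integrableOn_rpow_mul_exp_neg_mul_rpow (by norm_num) one_pos hb)
        (integrableOn_rpow_neg_half_div_one_add_mul_pow hS (by omega)) measurableSet_Ioi hexp

end WeightedIntegral

section SimplePartialFraction

variable {ι : Type*} [Fintype ι] {z : ι → ℂ} {c x : ℝ}

lemma inv_norm_le_sum_inv_norm (k : ι) : ‖z k‖⁻¹ ≤ ∑ j, ‖z j‖⁻¹ :=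
  Finset.single_le_sum (fun j _ => inv_nonneg.2 (norm_nonneg (z j))) (Finset.mem_univ k)

lemma sum_inv_norm_pos [Nonempty ι] (hz0 : ∀ k, z k ≠ 0) : 0 < ∑ k, ‖z k‖⁻¹ :=
  Finset.sum_pos (fun k _ => inv_pos.2 (norm_pos_iff.2 (hz0 k))) Finset.univ_nonempty

lemma norm_sum_inv_ofReal_sub_le_sum_inv_norm (hz : ∀ k, (z k).re ≤ 0) (hz0 : ∀ k, z k ≠ 0)
    (hx : 0 ≤ x) : ‖∑ k, ((x : ℂ) - z k)⁻¹‖ ≤ ∑ k, ‖z k‖⁻¹ :=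
  (norm_sum_le _ _).trans <| Finset.sum_le_sum fun k _ =>
    Complex.norm_inv_ofReal_sub_le_inv_norm (hz k) (hz0 k) hx

lemma norm_sum_inv_ofReal_sub_le (hz : ∀ k, (z k).re ≤ 0) (hz0 : ∀ k, z k ≠ 0) (hx : 0 ≤ x) :
    ‖∑ k, ((x : ℂ) - z k)⁻¹‖ ≤
      Fintype.card ι * (2 * ∑ k, ‖z k‖⁻¹) / (1 + (∑ k, ‖z k‖⁻¹) * x) := by
  rw [mul_div_assoc, ← nsmul_eq_mul, ← Finset.card_univ]
  refine (norm_sum_le _ _).trans (Finset.sum_le_card_nsmul _ _ _ fun k _ => ?_)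
  exact Complex.norm_inv_ofReal_sub_le (hz k) (hz0 k) hx (inv_norm_le_sum_inv_norm k)

lemma mul_sum_inv_norm_div_le_norm_sum_inv_ofReal_sub (hc0 : 0 ≤ c) (hc1 : c ≤ 1)
    (hz : ∀ k, (z k).re ≤ -(c * ‖z k‖)) (hz0 : ∀ k, z k ≠ 0) (hx : 0 ≤ x) :
    c * (∑ k, ‖z k‖⁻¹) / (1 + (∑ k, ‖z k‖⁻¹) * x) ≤ ‖∑ k, ((x : ℂ) - z k)⁻¹‖ :=
  calc c * (∑ k, ‖z k‖⁻¹) / (1 + (∑ k, ‖z k‖⁻¹) * x)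
      = ∑ k, c * ‖z k‖⁻¹ / (1 + (∑ k, ‖z k‖⁻¹) * x) := by rw [Finset.mul_sum, Finset.sum_div]
    _ ≤ ∑ k, ((x : ℂ) - z k)⁻¹.re := Finset.sum_le_sum fun k _ =>
        Complex.le_re_inv_ofReal_sub hc0 hc1 (hz k) (hz0 k) hx (inv_norm_le_sum_inv_norm k)
    _ = (∑ k, ((x : ℂ) - z k)⁻¹).re := (Complex.re_sum _ _).symm
    _ ≤ ‖∑ k, ((x : ℂ) - z k)⁻¹‖ := Complex.re_le_norm _

lemma sSup_norm_sum_inv_ofReal_sub_le (hz : ∀ k, (z k).re ≤ 0) (hz0 : ∀ k, z k ≠ 0) :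
    sSup ((fun x : ℝ => ‖∑ k, ((x : ℂ) - z k)⁻¹‖) '' Ici 0) ≤ ∑ k, ‖z k‖⁻¹ := by
  refine Real.sSup_le ?_ (Finset.sum_nonneg fun k _ => inv_nonneg.2 (norm_nonneg (z k)))
  rintro _ ⟨x, hx, rfl⟩
  exact norm_sum_inv_ofReal_sub_le_sum_inv_norm hz hz0 hx

lemma sum_inv_norm_pow_div_sqrt_le_integral [Nonempty ι] (hc0 : 0 < c) (hc1 : c ≤ 1)
    (hz : ∀ k, (z k).re ≤ -(c * ‖z k‖)) (hz0 : ∀ k, z k ≠ 0) {m : ℕ} (hm : 1 ≤ m) :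
    (∑ k, ‖z k‖⁻¹) ^ (2 * m) / √(∑ k, ‖z k‖⁻¹) ≤ 2 / c ^ (2 * m) * (m / π) *
      ∫ x in Ioi (0 : ℝ), ‖∑ k, ((x : ℂ) - z k)⁻¹‖ ^ (2 * m) * x ^ (-(1:ℝ)/2) := by
  set S := ∑ k, ‖z k‖⁻¹
  have hS : 0 < S := sum_inv_norm_pos hz0
  have hre : ∀ k, (z k).re ≤ 0 := fun k => (hz k).trans (neg_nonpos.2 (by positivity))
  set F := fun x : ℝ => ‖∑ k, ((x : ℂ) - z k)⁻¹‖ ^ (2 * m) * x ^ (-(1:ℝ)/2)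
  set f := fun x : ℝ => x ^ (-(1:ℝ)/2) / (1 + S * x) ^ (2 * m)
  have hf : IntegrableOn f (Ioi 0) := integrableOn_rpow_neg_half_div_one_add_mul_pow hS (by omega)
  have hF : IntegrableOn F (Ioi 0) := by
    refine (hf.const_mul ((Fintype.card ι * (2 * S)) ^ (2 * m))).mono'
      (by fun_prop : Measurable F).aestronglyMeasurable ?_
    filter_upwards [ae_restrict_mem measurableSet_Ioi] with x hx
    have hx : 0 < x := hx
    rw [Real.norm_of_nonneg (by positivity)]
    calc F x ≤ (Fintype.card ι * (2 * S) / (1 + S * x)) ^ (2 * m) * x ^ (-(1:ℝ)/2) := by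
          simp only [F]
          gcongr
          exact norm_sum_inv_ofReal_sub_le hre hz0 hx.le
      _ = _ := by simp only [f]; ring
  have hlower : ∀ x ∈ Ioi (0:ℝ), (c * S) ^ (2 * m) * f x ≤ F x := by
    intro x hx
    have hx : 0 < x := hx
    calc (c * S) ^ (2 * m) * f x = (c * S / (1 + S * x)) ^ (2 * m) * x ^ (-(1:ℝ)/2) := by
          simp only [f]; ring
      _ ≤ F x := by
          simp only [F]
          gcongr
          exact mul_sum_inv_norm_div_le_norm_sum_inv_ofReal_sub hc0.le hc1 hz hz0 hx.le
  calc S ^ (2 * m) / √S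
        = 2 / c ^ (2 * m) * (m / π) * ((c * S) ^ (2 * m) * (π / (2 * m) / √S)) := by
        field_simp
        ring
    _ ≤ 2 / c ^ (2 * m) * (m / π) * ((c * S) ^ (2 * m) * ∫ x in Ioi 0, f x) := by
        gcongr
        exact pi_div_le_integral_rpow_neg_half_div_one_add_mul_pow hS hm
    _ ≤ 2 / c ^ (2 * m) * (m / π) * ∫ x in Ioi 0, F x := by
        rw [← integral_const_mul]
        exact mul_le_mul_of_nonneg_left
          (setIntegral_mono_on (hf.const_mul _) hF measurableSet_Ioi hlower) (by positivity)

end SimplePartialFraction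

theorem stmt18
    (n : ℕ) (hn : 1 ≤ n) (α : ℝ) (hα : α ∈ Set.Ioo 0 (Real.pi / 2))
    (rk : Fin n → ℝ) (φk : Fin n → ℝ)
    (hrk : ∀ k, 0 < rk k) (hφk : ∀ k, φk k ∈ Set.Ioo (Real.pi - α) (Real.pi + α))
    (z : Fin n → ℂ) (hz : ∀ k, z k = (rk k : ℂ) * Complex.exp (φk k * Complex.I))
    (ρ : ℂ → ℂ) (hρ : ∀ w, ρ w = ∑ k, 1 / (w - z k))
    (m : ℕ) (hm : 1 ≤ m) :
    (sSup ((fun x : ℝ => ‖ρ (x:ℂ)‖) '' Set.Ici 0)) ^ (2 * (m:ℝ) - 1/2) ≤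
        (∑ k, 1 / rk k) ^ (2 * (m:ℝ) - 1/2) ∧
      (∑ k, 1 / rk k) ^ (2 * (m:ℝ) - 1/2) ≤
        (2 * Real.sqrt n / (Real.cos α) ^ (2 * m)) * ((m:ℝ) / Real.pi) *
          ∫ x in Set.Ioi (0:ℝ), ‖ρ (x:ℂ)‖ ^ (2 * m) * x ^ (-(1:ℝ)/2) := by
  have : Nonempty (Fin n) := ⟨⟨0, hn⟩⟩
  have hc : 0 < cos α := cos_pos_of_mem_Ioo ⟨by linarith [hα.1, pi_pos], hα.2⟩
  have hnorm : ∀ k, ‖z k‖ = rk k := fun k => by simp [hz k, abs_of_pos (hrk k)]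
  have hz0 : ∀ k, z k ≠ 0 := fun k => norm_pos_iff.1 (hnorm k ▸ hrk k)
  have hsector : ∀ k, (z k).re ≤ -(cos α * ‖z k‖) := fun k => hz k ▸
    Complex.re_ofReal_mul_exp_le_neg_cos_mul_norm (hrk k).le (by linarith [hα.2, pi_pos]) (hφk k)
  have hre : ∀ k, (z k).re ≤ 0 := fun k => (hsector k).trans (neg_nonpos.2 (by positivity))
  have hρ' : ∀ x : ℝ, ρ x = ∑ k, ((x : ℂ) - z k)⁻¹ := fun x => by simp [hρ]
  have hS : ∑ k, 1 / rk k = ∑ k, ‖z k‖⁻¹ := by simp [hnorm]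
  have hexp : 0 ≤ 2 * (m : ℝ) - 1 / 2 := by linarith [(by exact_mod_cast hm : (1 : ℝ) ≤ m)]
  simp only [hρ', hS]
  refine ⟨rpow_le_rpow (Real.sSup_nonneg (by rintro _ ⟨x, -, rfl⟩; positivity))
    (sSup_norm_sum_inv_ofReal_sub_le hre hz0) hexp, ?_⟩
  set S := ∑ k, ‖z k‖⁻¹
  calc S ^ (2 * (m:ℝ) - 1/2) = S ^ (2 * m) / √S := by
        rw [rpow_sub (sum_inv_norm_pos hz0), sqrt_eq_rpow]; norm_cast
    _ ≤ √n * (S ^ (2 * m) / √S) :=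
        le_mul_of_one_le_left (by positivity) (one_le_sqrt.2 (by exact_mod_cast hn))
    _ ≤ √n * (2 / cos α ^ (2 * m) * (m / π) *
          ∫ x in Ioi (0 : ℝ), ‖∑ k, ((x : ℂ) - z k)⁻¹‖ ^ (2 * m) * x ^ (-(1:ℝ)/2)) := by
        gcongr
        exact sum_inv_norm_pow_div_sqrt_le_integral hc (cos_le_one α) hsector hz0 hm
    _ = _ := by ring
end
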